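/- arXiv:2401.06266 — 2 statements merged into one kernel-verified Lean document; each statement's English description precedes it below -/
import Mathlib

section
/- Let n, m be positive integers, let A and P^k be real n×m matrices with all entries of P^k strictly positive, and let ε, Δt, γ > 0 and a ∈ ℝ^n, b ∈ ℝ^m. Define the matrix Q by Q_{ij} = exp( −(Δt/(1+εΔt)) A_{ij} + (1/(1+εΔt)) log P^k_{ij} ). Then for every real n×m matrix P with all entries strictly positive, (Δt/(1+εΔt)) · [ ⟨A, P⟩_F − ε H(P) + γ(‖a − P𝟙‖₁ + ‖b − Pᵀ𝟙‖₁) + (1/Δt) KL(P | P^k) ] = KL(P | Q) + (γΔt/(1+εΔt)) (‖a − P𝟙‖₁ + ‖b − Pᵀ𝟙‖₁) + c, where c = (Σ_{ij} P^k_{ij})/(1+εΔt) − Σ_{ij} Q_{ij} does not depend on P. In particular, the Mirror-C descent step for the entropic sGW objective is equivalent to minimizing KL(P|Q) plus the rescaled ℓ¹ marginal penalties. -/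
/-- The Mirror-C descent step for the entropic sGW objective: up to a constant `c`
independent of `P`, the rescaled objective equals `KL(P|Q)` plus rescaled ℓ¹ marginal
penalties, where `Q_{ij} = exp(−(Δt/(1+εΔt)) A_{ij} + (1/(1+εΔt)) log P^k_{ij})`. -/
theorem mirrorC_step_eq_KL_plus_penalty
    (n m : ℕ) (hn : 0 < n) (hm : 0 < m)
    (A Pk : Matrix (Fin n) (Fin m) ℝ) (hPk : ∀ i j, 0 < Pk i j)
    (ε Δt γ : ℝ) (hε : 0 < ε) (hΔt : 0 < Δt) (hγ : 0 < γ)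
    (a : Fin n → ℝ) (b : Fin m → ℝ)
    (Q : Matrix (Fin n) (Fin m) ℝ)
    (hQ : ∀ i j, Q i j =
      Real.exp (-(Δt / (1 + ε * Δt)) * A i j + (1 / (1 + ε * Δt)) * Real.log (Pk i j))) :
    ∀ P : Matrix (Fin n) (Fin m) ℝ, (∀ i j, 0 < P i j) →
      (Δt / (1 + ε * Δt)) *
        ((∑ i, ∑ j, A i j * P i j)
          - ε * (-(∑ i, ∑ j, P i j * (Real.log (P i j) - 1)))
          + γ * ((∑ i, |a i - ∑ j, P i j|) + (∑ j, |b j - ∑ i, P i j|))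
          + (1 / Δt) * (∑ i, ∑ j, (P i j * Real.log (P i j / Pk i j) - P i j + Pk i j)))
      = (∑ i, ∑ j, (P i j * Real.log (P i j / Q i j) - P i j + Q i j))
        + (γ * Δt / (1 + ε * Δt)) *
            ((∑ i, |a i - ∑ j, P i j|) + (∑ j, |b j - ∑ i, P i j|))
        + ((∑ i, ∑ j, Pk i j) / (1 + ε * Δt) - ∑ i, ∑ j, Q i j) := by
  intro P hP
  have hd : (0:ℝ) < 1 + ε * Δt := by positivity
  have hd' : (1 + ε * Δt) ≠ 0 := ne_of_gt hd
  have hΔ : Δt ≠ 0 := ne_of_gt hΔt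
  have key : ∀ i j,
      (Δt / (1 + ε * Δt)) * (A i j * P i j)
        + (Δt / (1 + ε * Δt)) * ε * (P i j * (Real.log (P i j) - 1))
        + (1 / (1 + ε * Δt)) * (P i j * Real.log (P i j / Pk i j) - P i j + Pk i j)
      = (P i j * Real.log (P i j / Q i j) - P i j + Q i j)
        + ((1 / (1 + ε * Δt)) * Pk i j - Q i j) := by
    intro i j
    have hQpos : 0 < Q i j := by rw [hQ]; exact Real.exp_pos _
    have hlogQ : Real.log (Q i j)
        = -(Δt / (1 + ε * Δt)) * A i j + (1 / (1 + ε * Δt)) * Real.log (Pk i j) := by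
      rw [hQ]; exact Real.log_exp _
    rw [Real.log_div (ne_of_gt (hP i j)) (ne_of_gt hQpos),
        Real.log_div (ne_of_gt (hP i j)) (ne_of_gt (hPk i j)), hlogQ]
    field_simp
    ring
  have main :
      (Δt / (1 + ε * Δt)) * (∑ i, ∑ j, A i j * P i j)
        + (Δt / (1 + ε * Δt)) * ε * (∑ i, ∑ j, P i j * (Real.log (P i j) - 1))
        + (1 / (1 + ε * Δt)) * (∑ i, ∑ j, (P i j * Real.log (P i j / Pk i j) - P i j + Pk i j))
      = (∑ i, ∑ j, (P i j * Real.log (P i j / Q i j) - P i j + Q i j))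
        + ((1 / (1 + ε * Δt)) * (∑ i, ∑ j, Pk i j) - ∑ i, ∑ j, Q i j) := by
    simp only [Finset.mul_sum, ← Finset.sum_add_distrib, ← Finset.sum_sub_distrib]
    exact Finset.sum_congr rfl fun i _ => Finset.sum_congr rfl fun j _ => key i j
  have hinv : Δt * (1 / Δt) = 1 := by field_simp
  linear_combination main
    + ((∑ i, ∑ j, (P i j * Real.log (P i j / Pk i j) - P i j + Pk i j)) / (1 + ε * Δt)) * hinv
end

section
/- Let D¹ be a real n×n matrix, D² a real m×m matrix, a ∈ ℝ^n, b ∈ ℝ^m, and let P be a real n×m matrix whose row sums equal a (Σ_j P_{ij} = a_i for all i) and whose column sums equal b (Σ_i P_{ij} = b_j for all j). Then Σ_{i,j,k,l} (D¹_{ik} − D²_{jl})² P_{ij} P_{kl} = Σ_{i,k} (D¹_{ik})² a_i a_k + Σ_{j,l} (D²_{jl})² b_j b_l − 2 ⟨D¹ P (D²)ᵀ, P⟩_F, where ⟨A, B⟩_F = Σ_{ij} A_{ij} B_{ij} is the Frobenius inner product. Equivalently, the Gromov–Wasserstein objective on U(a,b) equals (1/2)‖a‖²_{D¹⊙D¹}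 + (1/2)‖b‖²_{D²⊙D²} − ⟨D¹ P (D²)ᵀ, P⟩_F, where ‖a‖²_{D¹⊙D¹} = aᵀ(D¹⊙D¹)a with ⊙ the entrywise product. -/
open Matrix

/-- For `P` with row sums `a` and column sums `b`, the Gromov–Wasserstein objective expands:
`Σ (D¹_{ik} − D²_{jl})² P_{ij} P_{kl}
  = Σ (D¹_{ik})² a_i a_k + Σ (D²_{jl})² b_j b_l − 2⟨D¹ P (D²)ᵀ, P⟩_F`. -/
theorem GW_objective_expansion
    (n m : ℕ)
    (D1 : Matrix (Fin n) (Fin n) ℝ) (D2 : Matrix (Fin m) (Fin m) ℝ)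
    (a : Fin n → ℝ) (b : Fin m → ℝ)
    (P : Matrix (Fin n) (Fin m) ℝ)
    (hrow : ∀ i, ∑ j, P i j = a i) (hcol : ∀ j, ∑ i, P i j = b j) :
    ∑ i, ∑ j, ∑ k, ∑ l, (D1 i k - D2 j l) ^ 2 * (P i j * P k l)
      = (∑ i, ∑ k, (D1 i k) ^ 2 * (a i * a k))
        + (∑ j, ∑ l, (D2 j l) ^ 2 * (b j * b l))
        - 2 * ∑ i, ∑ j, (D1 * P * D2ᵀ) i j * P i j := by
  have h1 : (∑ i, ∑ k, (D1 i k) ^ 2 * (a i * a k))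
      = ∑ i, ∑ j, ∑ k, ∑ l, (D1 i k) ^ 2 * (P i j * P k l) := by
    refine Finset.sum_congr rfl fun i _ => ?_
    rw [Finset.sum_comm]
    refine Finset.sum_congr rfl fun k _ => ?_
    rw [← hrow i, ← hrow k, Finset.sum_mul_sum, Finset.mul_sum]
    exact Finset.sum_congr rfl fun j _ => Finset.mul_sum _ _ _
  have h2 : (∑ j, ∑ l, (D2 j l) ^ 2 * (b j * b l))
      = ∑ i, ∑ j, ∑ k, ∑ l, (D2 j l) ^ 2 * (P i j * P k l) := by
    have key : ∀ j l, (D2 j l) ^ 2 * (b j * b l)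
        = ∑ i, ∑ k, (D2 j l) ^ 2 * (P i j * P k l) := by
      intro j l
      rw [← hcol j, ← hcol l, Finset.sum_mul_sum, Finset.mul_sum]
      exact Finset.sum_congr rfl fun i _ => Finset.mul_sum _ _ _
    simp only [key]
    rw [show (∑ j, ∑ l, ∑ i, ∑ k, (D2 j l) ^ 2 * (P i j * P k l))
        = ∑ j, ∑ i : Fin n, ∑ l, ∑ k, (D2 j l) ^ 2 * (P i j * P k l) from
      Finset.sum_congr rfl fun j _ => Finset.sum_comm, Finset.sum_comm]
    refine Finset.sum_congr rfl fun i _ => Finset.sum_congr rfl fun j _ => ?_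
    exact Finset.sum_comm
  have h3 : (∑ i, ∑ j, (D1 * P * D2ᵀ) i j * P i j)
      = ∑ i, ∑ j, ∑ k, ∑ l, (D1 i k * D2 j l) * (P i j * P k l) := by
    refine Finset.sum_congr rfl fun i _ => Finset.sum_congr rfl fun j _ => ?_
    simp only [Matrix.mul_apply, Matrix.transpose_apply, Finset.sum_mul]
    rw [Finset.sum_comm]
    exact Finset.sum_congr rfl fun k _ => Finset.sum_congr rfl fun l _ => by ring
  rw [h1, h2, h3, Finset.mul_sum]
  simp only [Finset.mul_sum, ← Finset.sum_add_distrib, ← Finset.sum_sub_distrib]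
  exact Finset.sum_congr rfl fun i _ => Finset.sum_congr rfl fun j _ =>
    Finset.sum_congr rfl fun k _ => Finset.sum_congr rfl fun l _ => by ring
end
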